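/- Let G be a directed social network, let W* denote the maximum over all bijections π : V → {1, …, |V|} of the forward edge weight Σ_{(i,j) : π(i) < π(j)} w_{ij}, and let r ∈ (0, 1]. If a marketing strategy (π, p) satisfies R(π, p) ≥ r · R_max(G), then the forward edge weight of π satisfies Σ_{(i,j) : π(i) < π(j)} w_{ij} ≥ (16r/27) · W*. In other words, any r-approximate marketing strategy yields a (16r/27)-approximation of the maximum acyclic subgraph of G. -/
import Mathlib


open Finset

/-- The revenue of a marketing strategy `(π, p)` on a directed social network. -/
noncomputable def drevenue {V : Type*} [Fintype V] [DecidableEq V]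
    (w : V → V → ℝ) (π : V ≃ Fin (Fintype.card V)) (p : V → ℝ) : ℝ :=
  ∑ j, p j * (1 - p j) * ∑ i ∈ univ.filter (fun i => π i < π j), p i * w i j

/-- The maximum revenue of a directed social network. -/
noncomputable def dmaxRev {V : Type*} [Fintype V] [DecidableEq V]
    (w : V → V → ℝ) : ℝ :=
  sSup {r | ∃ (π : V ≃ Fin (Fintype.card V)) (p : V → ℝ),
    (∀ i, 1/2 ≤ p i ∧ p i ≤ 1) ∧ r = drevenue w π p}

/-- The total weight of the edges going forward in the ordering `π`. -/
noncomputable def forwardWeight {V : Type*} [Fintype V] [DecidableEq V]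
    (w : V → V → ℝ) (π : V ≃ Fin (Fintype.card V)) : ℝ :=
  ∑ j, ∑ i ∈ univ.filter (fun i => π i < π j), w i j

/-- `W*`: the maximum forward edge weight over all orderings of the buyers. -/
noncomputable def maxAcyclic {V : Type*} [Fintype V] [DecidableEq V]
    (w : V → V → ℝ) : ℝ :=
  sSup {x | ∃ π : V ≃ Fin (Fintype.card V), x = forwardWeight w π}

section Aux

variable {V : Type*} [Fintype V] [DecidableEq V]

lemma rev_le_quarter_fw (w : V → V → ℝ) (hnonneg : ∀ i j, 0 ≤ w i j)
    (π : V ≃ Fin (Fintype.card V)) (p : V → ℝ)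
    (hp : ∀ i, 1/2 ≤ p i ∧ p i ≤ 1) :
    drevenue w π p ≤ (1/4) * forwardWeight w π := by
  unfold drevenue forwardWeight
  rw [mul_sum]
  refine Finset.sum_le_sum fun j _ => ?_
  have hS : ∑ i ∈ univ.filter (fun i => π i < π j), p i * w i j
      ≤ ∑ i ∈ univ.filter (fun i => π i < π j), w i j := by
    refine Finset.sum_le_sum fun i _ => ?_
    nlinarith [(hp i).1, (hp i).2, hnonneg i j]
  have hS0 : 0 ≤ ∑ i ∈ univ.filter (fun i => π i < π j), p i * w i j := by
    refine Finset.sum_nonneg fun i _ => ?_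
    have := (hp i).1; nlinarith [hnonneg i j]
  have ha : p j * (1 - p j) ≤ 1/4 := by nlinarith [(hp j).1, (hp j).2]
  have ha0 : 0 ≤ p j * (1 - p j) := by nlinarith [(hp j).1, (hp j).2]
  nlinarith

lemma rev_twothirds (w : V → V → ℝ) (π : V ≃ Fin (Fintype.card V)) :
    drevenue w π (fun _ => (2/3 : ℝ)) = (4/27) * forwardWeight w π := by
  unfold drevenue forwardWeight
  rw [mul_sum]
  refine Finset.sum_congr rfl fun j _ => ?_
  simp only []
  rw [← Finset.mul_sum]
  ring

lemma rev_bddAbove (w : V → V → ℝ) (hnonneg : ∀ i j, 0 ≤ w i j) :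
    BddAbove {r | ∃ (π : V ≃ Fin (Fintype.card V)) (p : V → ℝ),
      (∀ i, 1/2 ≤ p i ∧ p i ≤ 1) ∧ r = drevenue w π p} := by
  refine ⟨(1/4) * ∑ j, ∑ i, w i j, ?_⟩
  rintro x ⟨π, p, hp, rfl⟩
  refine le_trans (rev_le_quarter_fw w hnonneg π p hp) ?_
  have : forwardWeight w π ≤ ∑ j, ∑ i, w i j := by
    unfold forwardWeight
    refine Finset.sum_le_sum fun j _ => ?_
    exact Finset.sum_le_sum_of_subset_of_nonneg (Finset.filter_subset _ _)
      (fun i _ _ => hnonneg i j)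
  linarith

lemma maxAcyclic_le (w : V → V → ℝ) (hnonneg : ∀ i j, 0 ≤ w i j) :
    maxAcyclic w ≤ (27/4) * dmaxRev w := by
  unfold maxAcyclic
  refine Real.sSup_le ?_ ?_
  · rintro x ⟨π', rfl⟩
    have hmem : drevenue w π' (fun _ => (2/3 : ℝ)) ∈ {r | ∃ (π : V ≃ Fin (Fintype.card V)) (p : V → ℝ),
        (∀ i, 1/2 ≤ p i ∧ p i ≤ 1) ∧ r = drevenue w π p} :=
      ⟨π', fun _ => (2/3 : ℝ), fun i => by norm_num, rfl⟩
    have h := le_csSup (rev_bddAbove w hnonneg) hmem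
    rw [rev_twothirds] at h
    unfold dmaxRev
    linarith
  · set π0 := Fintype.equivFin V
    have hmem : drevenue w π0 (fun _ => (2/3 : ℝ)) ∈ {r | ∃ (π : V ≃ Fin (Fintype.card V)) (p : V → ℝ),
        (∀ i, 1/2 ≤ p i ∧ p i ≤ 1) ∧ r = drevenue w π p} :=
      ⟨π0, fun _ => (2/3 : ℝ), fun i => by norm_num, rfl⟩
    have h := le_csSup (rev_bddAbove w hnonneg) hmem
    have h0 : 0 ≤ drevenue w π0 (fun _ => (2/3 : ℝ)) := by
      unfold drevenue
      refine Finset.sum_nonneg fun j _ => ?_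
      have : (0:ℝ) ≤ ∑ i ∈ univ.filter (fun i => π0 i < π0 j), (2/3 : ℝ) * w i j :=
        Finset.sum_nonneg fun i _ => by nlinarith [hnonneg i j]
      nlinarith
    unfold dmaxRev
    linarith

end Aux

/-- Any `r`-approximate marketing strategy for the maximum revenue of a directed
social network yields a `(16r/27)`-approximation of its maximum acyclic subgraph. -/
theorem approx_strategy_approx_maxAcyclic
    {V : Type*} [Fintype V] [DecidableEq V] (w : V → V → ℝ)
    (hnonneg : ∀ i j, 0 ≤ w i j) (hself : ∀ i, w i i = 0)
    (r : ℝ) (hr0 : 0 < r) (hr1 : r ≤ 1)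
    (π : V ≃ Fin (Fintype.card V)) (p : V → ℝ)
    (hp : ∀ i, 1/2 ≤ p i ∧ p i ≤ 1)
    (happrox : drevenue w π p ≥ r * dmaxRev w) :
    forwardWeight w π ≥ (16 * r / 27) * maxAcyclic w := by
  have h1 := rev_le_quarter_fw w hnonneg π p hp
  have h2 := maxAcyclic_le w hnonneg
  nlinarith [happrox, hr0.le]
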